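/- arXiv:2503.15122 — 2 statements merged into one kernel-verified Lean document; each statement's English description precedes it below -/
import Mathlib

section
/- Let μ = (μ₁,...,μ_r) be a system of measures with all moments finite such that the multi-indices n and n + e_j are both normal, with type II polynomials P_n and P_{n+e_j}. Then for z₀ ∈ ℂ, the Wronskian W(P_{n+e_j}, P_n; z₀) = P_{n+e_j}(z₀)P_n'(z₀) − P_{n+e_j}'(z₀)P_n(z₀) vanishes if and only if the index n is not normal for the doubly transformed system ((x−z₀)²μ₁,...,(x−z₀)²μ_r). -/
open Polynomial MeasureTheory

/-- `P` is a type II multiple orthogonal polynomial at multi-index `n` for the system of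
(possibly complex) measures `w j dμ j`. -/
def IsTypeII {r : ℕ} (μ : Fin r → Measure ℝ) (w : Fin r → ℝ → ℂ) (n : Fin r → ℕ)
    (P : Polynomial ℂ) : Prop :=
  P.Monic ∧ P.natDegree = ∑ j, n j ∧
    ∀ j, ∀ k < n j, ∫ x : ℝ, P.eval (x : ℂ) * (x : ℂ) ^ k * w j x ∂(μ j) = 0

/-- The index `n` is normal: the type II polynomial exists and is unique. -/
def NormalII {r : ℕ} (μ : Fin r → Measure ℝ) (w : Fin r → ℝ → ℂ) (n : Fin r → ℕ) : Prop :=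
  ∃! P : Polynomial ℂ, IsTypeII μ w n P

/-!
Normality of `n` says that the `N = |n|` orthogonality conditions of `n` are independent on
polynomials of degree `< N`. Hence the polynomials of degree `≤ N + 1` satisfying them form the
plane spanned by `P = P_{n+e_j}` and `Q = P_n`, and `W(P, Q; z₀)` is the determinant of the map
`(a, b) ↦ ((aP + bQ)(z₀), (aP + bQ)'(z₀))`. So the Wronskian vanishes iff some nonzero `aP + bQ`
has a double root at `z₀`, i.e. equals `(x - z₀)² D` with `D ≠ 0`, `deg D < N` and
`∫ (x - z₀)² D(x) xᵏ dμᵢ = 0` for `k < nᵢ`: exactly a failure of normality of `n` for the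
measures `(x - z₀)² μᵢ`.
-/

namespace Polynomial

variable {R : Type*} [CommRing R]

lemma sq_X_sub_C_dvd_iff {S : R[X]} {z : R} :
    (X - C z) ^ 2 ∣ S ↔ S.eval z = 0 ∧ (derivative S).eval z = 0 := by
  rcases eq_or_ne S 0 with rfl | hS
  · simp
  · exact (le_rootMultiplicity_iff hS).symm.trans (one_lt_rootMultiplicity_iff_isRoot hS)

lemma degree_sub_C_coeff_mul_lt {P S : R[X]} {m : ℕ} (hP : P.Monic) (hPm : P.natDegree = m)
    (hS : S.degree ≤ m) : (S - C (S.coeff m) * P).degree < m := by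
  subst hPm
  rw [degree_lt_iff_coeff_zero]
  intro k hk
  rcases hk.eq_or_lt with rfl | hlt
  · simp [hP.coeff_natDegree]
  · simp [coeff_eq_zero_of_degree_lt (hS.trans_lt (WithBot.coe_lt_coe.2 hlt)),
      coeff_eq_zero_of_natDegree_lt hlt]

variable [IsDomain R]

lemma eval_wronskian_eq_zero_iff_exists_sq_dvd {P Q : R[X]} {z : R} :
    (wronskian P Q).eval z = 0 ↔
      ∃ v : Fin 2 → R, v ≠ 0 ∧ (X - C z) ^ 2 ∣ C (v 0) * P + C (v 1) * Q := by
  have hdet : (wronskian P Q).eval z =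
      (!![P.eval z, Q.eval z; (derivative P).eval z, (derivative Q).eval z]).det := by
    rw [Matrix.det_fin_two_of, wronskian, eval_sub, eval_mul, eval_mul]
    ring
  rw [hdet, ← Matrix.exists_mulVec_eq_zero_iff]
  refine exists_congr fun v => and_congr_right fun _ => ?_
  rw [sq_X_sub_C_dvd_iff, funext_iff, Fin.forall_fin_two]
  simp [Matrix.mulVec, dotProduct, Fin.sum_univ_two, derivative_add, mul_comm]

lemma degree_sq_X_sub_C_mul_le_iff {D : R[X]} (hD : D ≠ 0) (z : R) (N : ℕ) :
    ((X - C z) ^ 2 * D).degree ≤ ((N + 1 : ℕ) : WithBot ℕ) ↔ D.degree < (N : WithBot ℕ) := by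
  have hsq : (X - C z) ^ 2 ≠ 0 := pow_ne_zero 2 (X_sub_C_ne_zero z)
  rw [degree_eq_natDegree (mul_ne_zero hsq hD), degree_eq_natDegree hD, Nat.cast_le, Nat.cast_lt,
    natDegree_mul hsq hD, natDegree_pow, natDegree_X_sub_C]
  omega

lemma C_mul_add_C_mul_ne_zero {P Q : R[X]} (hP : P.Monic) (hQ : Q ≠ 0)
    (hlt : Q.natDegree < P.natDegree) {v : Fin 2 → R} (hv : v ≠ 0) :
    C (v 0) * P + C (v 1) * Q ≠ 0 := by
  intro h
  have h0 : v 0 = 0 := by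
    simpa [hP.coeff_natDegree, coeff_eq_zero_of_natDegree_lt hlt] using
      congrArg (coeff · P.natDegree) h
  rw [h0, C_0, zero_mul, zero_add, mul_eq_zero, C_eq_zero] at h
  exact hv <| funext_iff.2 <| Fin.forall_fin_two.2 ⟨h0, h.resolve_right hQ⟩

end Polynomial

lemma LinearMap.map_C_mul {R M : Type*} [CommSemiring R] [AddCommMonoid M] [Module R M]
    (f : R[X] →ₗ[R] M) (a : R) (p : R[X]) : f (C a * p) = a • f p := by
  rw [← smul_eq_C_mul, map_smul]

lemma Finset.sum_ite_eq_add {ι M : Type*} [Fintype ι] [DecidableEq ι] [AddCommMonoid M]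
    (n : ι → M) (j : ι) (a : M) :
    ∑ i, (if i = j then n i + a else n i) = ∑ i, n i + a := by
  have h : ∀ i, (if i = j then n i + a else n i) = n i + if i = j then a else 0 := fun i => by
    split_ifs <;> simp
  simp [h, Finset.sum_add_distrib]

section OrthogonalityConditions

variable {K : Type*} [Field K] {ι : Type*} [Fintype ι] (L : ι → K[X] →ₗ[K] K)

/-- `L t = 0`, `t : ι`, are the orthogonality conditions of a multi-index of size `card ι`;
normality means that they are independent on polynomials of degree `< card ι`. -/
def IsNormalFamily : Prop :=
  ∀ D : K[X], D.degree < Fintype.card ι → (∀ t, L t D = 0) → D = 0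

def IsMonicOrthogonal (m : ℕ) (R : K[X]) : Prop :=
  R.Monic ∧ R.natDegree = m ∧ ∀ t, L t R = 0

variable {L}

lemma IsNormalFamily.exists_isMonicOrthogonal (hL : IsNormalFamily L) :
    ∃ R, IsMonicOrthogonal L (Fintype.card ι) R := by
  set N := Fintype.card ι
  let Φ : degreeLT K N →ₗ[K] ι → K := LinearMap.pi fun t => L t ∘ₗ (degreeLT K N).subtype
  have hinj : Function.Injective Φ := by
    rw [← LinearMap.ker_eq_bot, LinearMap.ker_eq_bot']
    exact fun D hD => Subtype.ext <| hL D (mem_degreeLT.1 D.2) fun t => congrFun hD t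
  have hsurj : Function.Surjective Φ := by
    refine (LinearMap.injective_iff_surjective_of_finrank_eq_finrank ?_).1 hinj
    simp [(degreeLTEquiv K N).finrank_eq, N]
  obtain ⟨S, hS⟩ := hsurj fun t => -L t (X ^ N)
  have hlt : (S : K[X]).degree < (X ^ N : K[X]).degree := by
    rw [degree_X_pow]
    exact mem_degreeLT.1 S.2
  refine ⟨X ^ N + (S : K[X]), (monic_X_pow N).add_of_left hlt, ?_, fun t => ?_⟩
  · rw [natDegree_add_eq_left_of_degree_lt hlt, natDegree_X_pow]
  · rw [map_add, show L t S = -L t (X ^ N) from congrFun hS t, add_neg_cancel]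

lemma IsNormalFamily.eq_of_isMonicOrthogonal (hL : IsNormalFamily L) {R R' : K[X]}
    (hR : IsMonicOrthogonal L (Fintype.card ι) R)
    (hR' : IsMonicOrthogonal L (Fintype.card ι) R') : R = R' := by
  obtain ⟨hRm, hRd, hRo⟩ := hR
  obtain ⟨hRm', hRd', hRo'⟩ := hR'
  have hdeg : R.degree = R'.degree := by
    rw [degree_eq_natDegree hRm.ne_zero, degree_eq_natDegree hRm'.ne_zero, hRd, hRd']
  have hlt := degree_sub_lt_left hdeg hRm.ne_zero (hRm.leadingCoeff.trans hRm'.leadingCoeff.symm)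
  rw [degree_eq_natDegree hRm.ne_zero, hRd] at hlt
  exact sub_eq_zero.1 <| hL _ hlt fun t => by rw [map_sub, hRo, hRo', sub_zero]

lemma existsUnique_isMonicOrthogonal_iff :
    (∃! R, IsMonicOrthogonal L (Fintype.card ι) R) ↔ IsNormalFamily L := by
  refine ⟨?_, fun hL => ?_⟩
  · rintro ⟨R, ⟨hRm, hRd, hRo⟩, huniq⟩ D hD hDo
    have hlt : D.degree < R.degree := by rwa [degree_eq_natDegree hRm.ne_zero, hRd]
    have hRD : R + D = R := huniq _ ⟨hRm.add_of_left hlt,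
      by rw [natDegree_add_eq_left_of_degree_lt hlt, hRd], fun t => by simp [hRo, hDo]⟩
    simpa using hRD
  · obtain ⟨R, hR⟩ := hL.exists_isMonicOrthogonal
    exact ⟨R, hR, fun R' hR' => hL.eq_of_isMonicOrthogonal hR' hR⟩

lemma IsNormalFamily.eq_C_mul_add_C_mul (hL : IsNormalFamily L) {P Q S : K[X]}
    (hP : IsMonicOrthogonal L (Fintype.card ι + 1) P)
    (hQ : IsMonicOrthogonal L (Fintype.card ι) Q)
    (hS : S.degree ≤ (Fintype.card ι + 1 : ℕ)) (hSo : ∀ t, L t S = 0) :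
    ∃ a b : K, S = C a * P + C b * Q := by
  obtain ⟨hPm, hPd, hPo⟩ := hP
  obtain ⟨hQm, hQd, hQo⟩ := hQ
  set T := S - C (S.coeff (Fintype.card ι + 1)) * P
  have hT : T.degree ≤ Fintype.card ι :=
    Order.le_of_lt_succ (degree_sub_C_coeff_mul_lt hPm hPd hS)
  set U := T - C (T.coeff (Fintype.card ι)) * Q
  have hU : U = 0 := by
    refine hL U (degree_sub_C_coeff_mul_lt hQm hQd hT) fun t => ?_
    simp only [U, T, map_sub, LinearMap.map_C_mul, hSo, hPo, hQo, smul_zero, sub_zero]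
  refine ⟨S.coeff (Fintype.card ι + 1), T.coeff (Fintype.card ι), ?_⟩
  simp only [U, T] at hU
  linear_combination hU

lemma IsNormalFamily.eval_wronskian_eq_zero_iff (hL : IsNormalFamily L) {P Q : K[X]}
    (hP : IsMonicOrthogonal L (Fintype.card ι + 1) P)
    (hQ : IsMonicOrthogonal L (Fintype.card ι) Q) (z : K) :
    (wronskian P Q).eval z = 0 ↔
      ¬IsNormalFamily fun t => L t ∘ₗ LinearMap.mulLeft K ((X - C z) ^ 2) := by
  simp only [eval_wronskian_eq_zero_iff_exists_sq_dvd, IsNormalFamily, not_forall, exists_prop,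
    LinearMap.comp_apply, LinearMap.mulLeft_apply]
  constructor
  · rintro ⟨v, hv, D, hD⟩
    obtain ⟨hPm, hPd, hPo⟩ := hP
    obtain ⟨hQm, hQd, hQo⟩ := hQ
    have hS := C_mul_add_C_mul_ne_zero hPm hQm.ne_zero (by omega) hv
    have hD0 : D ≠ 0 := by
      rintro rfl
      exact hS (by rw [hD, mul_zero])
    refine ⟨D, (degree_sq_X_sub_C_mul_le_iff hD0 z _).1 ?_, fun t => ?_, hD0⟩
    · rw [← hD]
      exact degree_le_of_natDegree_le (by compute_degree; omega)
    · rw [← hD, map_add, LinearMap.map_C_mul, LinearMap.map_C_mul, hPo, hQo, smul_zero,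
        smul_zero, add_zero]
  · rintro ⟨D, hDdeg, hDo, hD0⟩
    obtain ⟨a, b, hab⟩ := hL.eq_C_mul_add_C_mul hP hQ
      ((degree_sq_X_sub_C_mul_le_iff hD0 z _).2 hDdeg) hDo
    refine ⟨![a, b], fun hv => ?_, D, by simpa using hab.symm⟩
    obtain ⟨rfl, rfl⟩ : a = 0 ∧ b = 0 := by simpa using hv
    simp [hD0, X_sub_C_ne_zero] at hab

end OrthogonalityConditions

section Moments

variable {ν : Measure ℝ}

lemma integrable_eval_of_integrable_pow (hν : ∀ k : ℕ, Integrable (fun x : ℝ => x ^ k) ν)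
    (S : ℂ[X]) : Integrable (fun x : ℝ => S.eval (x : ℂ)) ν := by
  simp_rw [eval_eq_sum_range]
  refine integrable_finsetSum _ fun i _ => ?_
  simpa using ((hν i).ofReal (𝕜 := ℂ)).const_mul (S.coeff i)

variable (ν) in
noncomputable def integralEval (hν : ∀ k : ℕ, Integrable (fun x : ℝ => x ^ k) ν) :
    ℂ[X] →ₗ[ℂ] ℂ where
  toFun S := ∫ x, S.eval (x : ℂ) ∂ν
  map_add' S T := by
    simp only [eval_add]
    exact integral_add (integrable_eval_of_integrable_pow hν S)
      (integrable_eval_of_integrable_pow hν T)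
  map_smul' c S := by
    simp only [eval_smul, smul_eq_mul, RingHom.id_apply]
    exact integral_const_mul c _

noncomputable def momentFunctionals {r : ℕ} (μ : Fin r → Measure ℝ)
    (hmom : ∀ j, ∀ k : ℕ, Integrable (fun x : ℝ => x ^ k) (μ j)) (n : Fin r → ℕ)
    (t : Σ i, Fin (n i)) : ℂ[X] →ₗ[ℂ] ℂ :=
  integralEval (μ t.1) (hmom t.1) ∘ₗ LinearMap.mulRight ℂ (X ^ (t.2 : ℕ))

variable {r : ℕ} (μ : Fin r → Measure ℝ)
  (hmom : ∀ j, ∀ k : ℕ, Integrable (fun x : ℝ => x ^ k) (μ j)) {n : Fin r → ℕ}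
  {w : Fin r → ℝ → ℂ} {W : ℂ[X]}

lemma momentFunctionals_apply_mul (hw : ∀ i x, w i x = W.eval (x : ℂ)) (i : Fin r) (k : ℕ)
    (hk : k < n i) (R : ℂ[X]) :
    momentFunctionals μ hmom n ⟨i, ⟨k, hk⟩⟩ (W * R) =
      ∫ x : ℝ, R.eval (x : ℂ) * (x : ℂ) ^ k * w i x ∂(μ i) := by
  simp only [momentFunctionals, integralEval, LinearMap.coe_comp, LinearMap.coe_mk,
    AddHom.coe_mk, Function.comp_apply, LinearMap.mulRight_apply, eval_mul, eval_pow, eval_X, hw]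
  congr 1 with x
  ring

lemma isTypeII_iff_isMonicOrthogonal (hw : ∀ i x, w i x = W.eval (x : ℂ)) {R : ℂ[X]} :
    IsTypeII μ w n R ↔ IsMonicOrthogonal
      (fun t => momentFunctionals μ hmom n t ∘ₗ LinearMap.mulLeft ℂ W)
      (Fintype.card (Σ i, Fin (n i))) R := by
  simp only [IsTypeII, IsMonicOrthogonal, Fintype.card_sigma, Fintype.card_fin, Sigma.forall,
    Fin.forall_iff, LinearMap.comp_apply, LinearMap.mulLeft_apply,
    momentFunctionals_apply_mul μ hmom hw]

lemma normalII_iff_isNormalFamily (hw : ∀ i x, w i x = W.eval (x : ℂ)) :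
    NormalII μ w n ↔
      IsNormalFamily fun t => momentFunctionals μ hmom n t ∘ₗ LinearMap.mulLeft ℂ W := by
  rw [NormalII, ← existsUnique_isMonicOrthogonal_iff]
  exact existsUnique_congr fun R => isTypeII_iff_isMonicOrthogonal μ hmom hw

end Moments

theorem stmt14_general (r : ℕ) (μ : Fin r → Measure ℝ)
    (hmom : ∀ j, ∀ k : ℕ, Integrable (fun x : ℝ => x ^ k) (μ j))
    (n : Fin r → ℕ) (j : Fin r)
    (Q P : Polynomial ℂ)
    (hnormn : NormalII μ (fun _ _ => 1) n)
    (hQ : IsTypeII μ (fun _ _ => 1) n Q)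
    (hP : IsTypeII μ (fun _ _ => 1) (fun i => if i = j then n i + 1 else n i) P)
    (z₀ : ℂ) :
    P.eval z₀ * (derivative Q).eval z₀ - (derivative P).eval z₀ * Q.eval z₀ = 0 ↔
      ¬ NormalII μ (fun _ x => ((x : ℂ) - z₀) ^ 2) n := by
  set L := momentFunctionals μ hmom n
  have hone : ∀ (_ : Fin r) (x : ℝ), (1 : ℂ) = (1 : ℂ[X]).eval (x : ℂ) := fun _ _ => eval_one.symm
  have hsq : ∀ (_ : Fin r) (x : ℝ), ((x : ℂ) - z₀) ^ 2 = ((X - C z₀) ^ 2).eval (x : ℂ) := by simp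
  have hL : IsNormalFamily L := by
    simpa only [LinearMap.mulLeft_one, LinearMap.comp_id] using
      (normalII_iff_isNormalFamily μ hmom hone).1 hnormn
  have hQL : IsMonicOrthogonal L (Fintype.card (Σ i, Fin (n i))) Q := by
    simpa only [LinearMap.mulLeft_one, LinearMap.comp_id] using
      (isTypeII_iff_isMonicOrthogonal μ hmom hone).1 hQ
  have hPL : IsMonicOrthogonal L (Fintype.card (Σ i, Fin (n i)) + 1) P := by
    refine ⟨hP.1, by simp [hP.2.1, Finset.sum_ite_eq_add], fun ⟨i, k⟩ => ?_⟩
    rw [← one_mul P, momentFunctionals_apply_mul μ hmom hone]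
    exact hP.2.2 i k (by dsimp only; split_ifs <;> omega)
  rw [← eval_mul, ← eval_mul, ← eval_sub]
  change (wronskian P Q).eval z₀ = 0 ↔ _
  rw [hL.eval_wronskian_eq_zero_iff hPL hQL, normalII_iff_isNormalFamily μ hmom hsq]

/-- Interlacing criterion for type II polynomials: if `n` and `n + e_j` are normal, with
type II polynomials `Q = P_n` and `P = P_{n+e_j}`, then for `z₀ ∈ ℂ` the Wronskian
`W(P, Q; z₀) = P(z₀)Q'(z₀) - P'(z₀)Q(z₀)` vanishes iff `n` is not normal for the doubly
transformed system `((x-z₀)²μ₁, ..., (x-z₀)²μ_r)`. -/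
theorem stmt14 (r : ℕ) (μ : Fin r → Measure ℝ)
    (hmom : ∀ j, ∀ k : ℕ, Integrable (fun x : ℝ => x ^ k) (μ j))
    (n : Fin r → ℕ) (j : Fin r)
    (Q P : Polynomial ℂ)
    (hnormn : NormalII μ (fun _ _ => 1) n)
    (hnormnj : NormalII μ (fun _ _ => 1) (fun i => if i = j then n i + 1 else n i))
    (hQ : IsTypeII μ (fun _ _ => 1) n Q)
    (hP : IsTypeII μ (fun _ _ => 1) (fun i => if i = j then n i + 1 else n i) P)
    (z₀ : ℂ) :
    P.eval z₀ * (derivative Q).eval z₀ - (derivative P).eval z₀ * Q.eval z₀ = 0 ↔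
      ¬ NormalII μ (fun _ x => ((x : ℂ) - z₀) ^ 2) n :=
  stmt14_general r μ hmom n j Q P hnormn hQ hP z₀
end

section
/- Let (μ₁, μ₂) be a pair of measures with all moments finite, and let μ̃₂ be defined by dμ̃₂(x) = dμ₂(x) + Q(x)dμ₁(x) where Q is a polynomial of degree at most s. Then for any multi-index n = (n₁, n₂) with n₂ ≤ n₁ − s, the index n is normal with respect to (μ₁, μ₂) if and only if it is normal with respect to (μ₁, μ̃₂); in that case the type II polynomials coincide P̃_n = P_n, and the type I polynomials satisfy Ã_n^{(1)} = A_n^{(1)} − Q·A_n^{(2)} and Ã_n^{(2)} = A_n^{(2)}. -/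
open Polynomial MeasureTheory

private lemma int_poly {μ : Measure ℝ} (hmom : ∀ k : ℕ, Integrable (fun x : ℝ => x ^ k) μ)
    (R : Polynomial ℝ) : Integrable (fun x : ℝ => R.eval x) μ := by
  have h : (fun x : ℝ => R.eval x)
      = fun x => ∑ i ∈ Finset.range (R.natDegree + 1), R.coeff i * x ^ i := by
    funext x; rw [Polynomial.eval_eq_sum_range]
  rw [h]
  exact integrable_finset_sum _ (fun i _ => (hmom i).const_mul _)

private lemma int_poly_mul {μ : Measure ℝ} (hmom : ∀ k : ℕ, Integrable (fun x : ℝ => x ^ k) μ)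
    (R : Polynomial ℝ) (k : ℕ) : Integrable (fun x : ℝ => R.eval x * x ^ k) μ := by
  have := int_poly hmom (R * Polynomial.X ^ k)
  simpa using this

private lemma vanish_Q {μ : Measure ℝ} (hmom : ∀ k : ℕ, Integrable (fun x : ℝ => x ^ k) μ)
    (P Q : Polynomial ℝ) {n₁ : ℕ} (hP : ∀ k < n₁, ∫ x : ℝ, P.eval x * x ^ k ∂μ = 0)
    {k : ℕ} (hk : k + Q.natDegree < n₁) :
    ∫ x : ℝ, P.eval x * x ^ k * Q.eval x ∂μ = 0 := by
  have hQx : ∀ x : ℝ, Q.eval x = ∑ j ∈ Finset.range (Q.natDegree + 1), Q.coeff j * x ^ j :=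
    fun x => Polynomial.eval_eq_sum_range (p := Q) x
  have h : (fun x : ℝ => P.eval x * x ^ k * Q.eval x)
      = fun x => ∑ j ∈ Finset.range (Q.natDegree + 1), Q.coeff j * (P.eval x * x ^ (k + j)) := by
    funext x
    rw [hQx x, Finset.mul_sum]
    exact Finset.sum_congr rfl fun j _ => by rw [pow_add]; ring
  rw [h, integral_finset_sum _ (fun j _ => ((int_poly_mul hmom P (k + j)).const_mul _))]
  refine Finset.sum_eq_zero fun j hj => ?_
  rw [MeasureTheory.integral_const_mul, hP (k + j) (by have := Finset.mem_range.mp hj; omega),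
    mul_zero]

/-- `P` is a type II multiple orthogonal polynomial at `(n₁, n₂)` for the pair of measures
`(μ₁, μ₂ + q·μ₁)`, where the perturbation of the second measure has density `q` with
respect to `μ₁`. -/
def IsTypeII2 (μ₁ μ₂ : Measure ℝ) (q : ℝ → ℝ) (n₁ n₂ : ℕ) (P : Polynomial ℝ) : Prop :=
  P.Monic ∧ P.natDegree = n₁ + n₂ ∧
    (∀ k < n₁, ∫ x : ℝ, P.eval x * x ^ k ∂μ₁ = 0) ∧
    (∀ k < n₂, (∫ x : ℝ, P.eval x * x ^ k ∂μ₂)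
      + (∫ x : ℝ, P.eval x * x ^ k * q x ∂μ₁) = 0)

/-- `(A, B)` is the type I vector at `(n₁, n₂)` for the pair `(μ₁, μ₂ + q·μ₁)`. -/
def IsTypeI2 (μ₁ μ₂ : Measure ℝ) (q : ℝ → ℝ) (n₁ n₂ : ℕ) (A B : Polynomial ℝ) : Prop :=
  (A ≠ 0 → A.natDegree < n₁) ∧ (B ≠ 0 → B.natDegree < n₂) ∧
    (∀ k : ℕ, k + 1 < n₁ + n₂ →
      (∫ x : ℝ, A.eval x * x ^ k ∂μ₁) + (∫ x : ℝ, B.eval x * x ^ k ∂μ₂)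
        + (∫ x : ℝ, B.eval x * x ^ k * q x ∂μ₁) = 0) ∧
    ((∫ x : ℝ, A.eval x * x ^ (n₁ + n₂ - 1) ∂μ₁)
      + (∫ x : ℝ, B.eval x * x ^ (n₁ + n₂ - 1) ∂μ₂)
      + (∫ x : ℝ, B.eval x * x ^ (n₁ + n₂ - 1) * (q x) ∂μ₁) = 1)

/-- Perturbation lemma: let `μ̃₂ = μ₂ + Q·μ₁` with `deg Q ≤ s`. For any index `(n₁, n₂)`
with `n₂ ≤ n₁ - s`, the index is normal for `(μ₁, μ₂)` iff it is normal for `(μ₁, μ̃₂)`;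
in that case the type II polynomials coincide, and the type I polynomials satisfy
`Ã⁽¹⁾ = A⁽¹⁾ - Q·A⁽²⁾`, `Ã⁽²⁾ = A⁽²⁾`. -/
theorem stmt16 (μ₁ μ₂ : Measure ℝ)
    (hmom₁ : ∀ k : ℕ, Integrable (fun x : ℝ => x ^ k) μ₁)
    (hmom₂ : ∀ k : ℕ, Integrable (fun x : ℝ => x ^ k) μ₂)
    (Q : Polynomial ℝ) (s : ℕ) (hQs : Q.natDegree ≤ s)
    (n₁ n₂ : ℕ) (hn : n₂ + s ≤ n₁) :
    ((∃! P : Polynomial ℝ, IsTypeII2 μ₁ μ₂ (fun _ => 0) n₁ n₂ P) ↔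
      (∃! P : Polynomial ℝ, IsTypeII2 μ₁ μ₂ Q.eval n₁ n₂ P)) ∧
    ((∃! P : Polynomial ℝ, IsTypeII2 μ₁ μ₂ (fun _ => 0) n₁ n₂ P) →
      (∀ P : Polynomial ℝ, IsTypeII2 μ₁ μ₂ (fun _ => 0) n₁ n₂ P →
        IsTypeII2 μ₁ μ₂ Q.eval n₁ n₂ P) ∧
      (∀ A B : Polynomial ℝ, IsTypeI2 μ₁ μ₂ (fun _ => 0) n₁ n₂ A B →
        IsTypeI2 μ₁ μ₂ Q.eval n₁ n₂ (A - Q * B) B)) := by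
  -- Type II conditions are equivalent
  have hII : ∀ P : Polynomial ℝ,
      IsTypeII2 μ₁ μ₂ (fun _ => 0) n₁ n₂ P ↔ IsTypeII2 μ₁ μ₂ Q.eval n₁ n₂ P := by
    intro P
    constructor
    · rintro ⟨hm, hd, h1, h2⟩
      refine ⟨hm, hd, h1, fun k hk => ?_⟩
      rw [vanish_Q hmom₁ P Q h1 (by omega), add_zero]
      have := h2 k hk
      simpa using this
    · rintro ⟨hm, hd, h1, h2⟩
      refine ⟨hm, hd, h1, fun k hk => ?_⟩
      have := h2 k hk
      rw [vanish_Q hmom₁ P Q h1 (by omega), add_zero] at this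
      simpa using this
  constructor
  · exact existsUnique_congr hII
  · intro _
    refine ⟨fun P hP => (hII P).mp hP, ?_⟩
    rintro A B ⟨hA, hB, h1, h2⟩
    have key : ∀ k : ℕ,
        (∫ x : ℝ, (A - Q * B).eval x * x ^ k ∂μ₁) + (∫ x : ℝ, B.eval x * x ^ k ∂μ₂)
          + (∫ x : ℝ, B.eval x * x ^ k * Q.eval x ∂μ₁)
        = (∫ x : ℝ, A.eval x * x ^ k ∂μ₁) + (∫ x : ℝ, B.eval x * x ^ k ∂μ₂)
          + (∫ x : ℝ, B.eval x * x ^ k * (0:ℝ) ∂μ₁) := by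
      intro k
      have hsplit : (∫ x : ℝ, (A - Q * B).eval x * x ^ k ∂μ₁)
          = (∫ x : ℝ, A.eval x * x ^ k ∂μ₁) - ∫ x : ℝ, B.eval x * x ^ k * Q.eval x ∂μ₁ := by
        have h1 : (fun x : ℝ => (A - Q * B).eval x * x ^ k)
            = fun x => A.eval x * x ^ k - B.eval x * x ^ k * Q.eval x := by
          funext x; simp; ring
        have hi1 := int_poly_mul hmom₁ A k
        have hi2 : Integrable (fun x : ℝ => B.eval x * x ^ k * Q.eval x) μ₁ := by
          have := int_poly hmom₁ (B * Polynomial.X ^ k * Q)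
          simpa using this
        rw [h1, integral_sub hi1 hi2]
      rw [hsplit]
      simp
      ring
    refine ⟨?_, hB, fun k hk => by rw [key k]; exact h1 k hk, by rw [key _]; exact h2⟩
    intro hne
    by_cases hB0 : B = 0
    · subst hB0
      simp only [mul_zero, sub_zero] at hne ⊢
      exact hA hne
    · have hBd := hB hB0
      have hQB : (Q * B).natDegree < n₁ := by
        calc (Q * B).natDegree ≤ Q.natDegree + B.natDegree := Polynomial.natDegree_mul_le
        _ < n₁ := by omega
      have hAd : A.natDegree < n₁ := by
        by_cases hA0 : A = 0
        · simp [hA0]; omega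
        · exact hA hA0
      calc (A - Q * B).natDegree ≤ max A.natDegree (Q * B).natDegree :=
            Polynomial.natDegree_sub_le _ _
      _ < n₁ := by omega
end
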